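/- Let f, g : ℕ → ℕ with g(k) ≥ 1 for all k, and suppose there exists a real ε > 0 such that (1+ε)·g(k) ≤ f(k) for all k. Then for every natural number n ≥ 1, 𝔠(n·f, g) = 𝔠(f,g), where (n·f)(k) = n·f(k). -/

import Mathlib

/-- `B` is a `g`-slalom: a sequence of finite sets of naturals with `|B k| = g k`. -/
def IsSlalom (g : ℕ → ℕ) (B : ℕ → Finset ℕ) : Prop := ∀ k, (B k).card = g k

/-- `x` is covered by the slalom `B`. -/
def Covers (B : ℕ → Finset ℕ) (x : ℕ → ℕ) : Prop := ∀ k, x k ∈ B k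

/-- `slalomCov f g` is the least cardinality of a family of `g`-slaloms covering
every `x : ℕ → ℕ` with `x k < f k` for all `k`. -/
noncomputable def slalomCov (f g : ℕ → ℕ) : Cardinal :=
  sInf { c : Cardinal | ∃ 𝓑 : Set (ℕ → Finset ℕ),
    (∀ B ∈ 𝓑, IsSlalom g B) ∧
    (∀ x : ℕ → ℕ, (∀ k, x k < f k) → ∃ B ∈ 𝓑, Covers B x) ∧
    c = Cardinal.mk 𝓑 }

/-!
Write `d = f - g`, which is positive since `(1 + ε) g ≤ f`. Given a cover `𝓑` for `f` and a cover
`𝓒` for some `h ≥ g`, a function `x < h + d` is covered as follows: values below `f k` are replaced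
by their index in `B k` (which is `< g k`) and values `a ≥ f k` by `g k + (a - f k)`; the resulting
function is `< h`, so a slalom of `𝓒`, decoded through `B`, catches `x`. Hence
`𝔠(h + d, g) ≤ 𝔠(f, g) · 𝔠(h, g)`. A diagonal argument shows `𝔠(f, g)` is uncountable, so iterating
gives `𝔠(g + j d, g) ≤ 𝔠(f, g)` for every `j`, and `n f ≤ g + j d` once `j ≥ n (1 + ε) / ε`.
-/

open Cardinal

structure IsSlalomCover (f g : ℕ → ℕ) (𝓑 : Set (ℕ → Finset ℕ)) : Prop where
  isSlalom : ∀ B ∈ 𝓑, IsSlalom g B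
  covers : ∀ x : ℕ → ℕ, (∀ k, x k < f k) → ∃ B ∈ 𝓑, Covers B x

section

variable {f f' g h : ℕ → ℕ} {𝓑 𝓒 : Set (ℕ → Finset ℕ)}

noncomputable def slalomDecode (S : Finset ℕ) (a j : ℕ) : ℕ :=
  if hj : j < S.card then S.equivFin.symm ⟨j, hj⟩ else a + (j - S.card)

theorem exists_lt_card_slalomDecode_eq {S : Finset ℕ} {b : ℕ} (hb : b ∈ S) (a : ℕ) :
    ∃ j < S.card, slalomDecode S a j = b :=
  ⟨S.equivFin ⟨b, hb⟩, (S.equivFin ⟨b, hb⟩).isLt, by simp [slalomDecode]⟩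

theorem slalomDecode_card_add (S : Finset ℕ) (a i : ℕ) :
    slalomDecode S a (S.card + i) = a + i := by
  simp [slalomDecode]

theorem exists_isSlalom_superset (S : ℕ → Finset ℕ) (hS : ∀ k, (S k).card ≤ g k) :
    ∃ D, IsSlalom g D ∧ ∀ k, S k ⊆ D k := by
  choose D hsub hcard using fun k => Infinite.exists_superset_card_eq (S k) (g k) (hS k)
  exact ⟨D, hcard, hsub⟩

theorem IsSlalomCover.mono (h𝓑 : IsSlalomCover f' g 𝓑) (hf : ∀ k, f k ≤ f' k) :
    IsSlalomCover f g 𝓑 :=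
  ⟨h𝓑.isSlalom, fun x hx => h𝓑.covers x fun k => (hx k).trans_le (hf k)⟩

theorem isSlalomCover_setOf_isSlalom (hg : ∀ k, 1 ≤ g k) :
    IsSlalomCover f g {B | IsSlalom g B} :=
  ⟨fun _ hB => hB, fun x _ => ⟨fun k => Finset.Ico (x k) (x k + g k), fun k => by simp,
    fun k => Finset.mem_Ico.mpr ⟨le_rfl, Nat.lt_add_of_pos_right (hg k)⟩⟩⟩

theorem slalomCov_le_mk (h𝓑 : IsSlalomCover f g 𝓑) : slalomCov f g ≤ #𝓑 :=
  csInf_le' ⟨𝓑, h𝓑.isSlalom, h𝓑.covers, rfl⟩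

theorem exists_isSlalomCover_mk_eq (hg : ∀ k, 1 ≤ g k) :
    ∃ 𝓑, IsSlalomCover f g 𝓑 ∧ #𝓑 = slalomCov f g := by
  have huniv := isSlalomCover_setOf_isSlalom (f := f) hg
  obtain ⟨𝓑, h₁, h₂, h₃⟩ : slalomCov f g ∈ _ :=
    csInf_mem ⟨_, _, huniv.isSlalom, huniv.covers, rfl⟩
  exact ⟨𝓑, ⟨h₁, h₂⟩, h₃.symm⟩

theorem slalomCov_mono (hg : ∀ k, 1 ≤ g k) (hf : ∀ k, f k ≤ f' k) :
    slalomCov f g ≤ slalomCov f' g := by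
  obtain ⟨𝓑, h𝓑, hmk⟩ := exists_isSlalomCover_mk_eq (f := f') hg
  exact hmk ▸ slalomCov_le_mk (h𝓑.mono hf)

theorem exists_forall_not_covers (hgf : ∀ k, g k < f k) (e : ℕ → ℕ → Finset ℕ)
    (he : ∀ i, IsSlalom g (e i)) : ∃ x : ℕ → ℕ, (∀ k, x k < f k) ∧ ∀ i, ¬ Covers (e i) x := by
  have hdiag : ∀ k, ∃ a, a ∈ Finset.range (f k) ∧ a ∉ e k k := fun k =>
    Finset.exists_mem_notMem_of_card_lt_card (by simpa [he k k] using hgf k)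
  choose x hxf hx using hdiag
  exact ⟨x, fun k => Finset.mem_range.mp (hxf k), fun i hi => hx i (hi i)⟩

theorem IsSlalomCover.not_countable (hgf : ∀ k, g k < f k) (h𝓑 : IsSlalomCover f g 𝓑) :
    ¬ 𝓑.Countable := by
  intro hcount
  obtain ⟨B, hB, -⟩ := h𝓑.covers 0 fun k => (Nat.zero_le _).trans_lt (hgf k)
  obtain ⟨e, rfl⟩ := hcount.exists_eq_range ⟨B, hB⟩
  obtain ⟨x, hxf, hx⟩ := exists_forall_not_covers hgf e fun i => h𝓑.isSlalom _ ⟨i, rfl⟩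
  obtain ⟨-, ⟨i, rfl⟩, hi⟩ := h𝓑.covers x hxf
  exact hx i hi

theorem aleph0_lt_slalomCov (hg : ∀ k, 1 ≤ g k) (hgf : ∀ k, g k < f k) :
    ℵ₀ < slalomCov f g := by
  obtain ⟨𝓑, h𝓑, hmk⟩ := exists_isSlalomCover_mk_eq (f := f) hg
  rw [← hmk]
  exact lt_of_not_ge fun hle => h𝓑.not_countable hgf (le_aleph0_iff_set_countable.mp hle)

theorem IsSlalomCover.exists_add_sub (hf : ∀ k, 0 < f k) (hgf : ∀ k, g k ≤ f k)
    (hgh : ∀ k, g k ≤ h k) (h𝓑 : IsSlalomCover f g 𝓑) (h𝓒 : IsSlalomCover h g 𝓒) :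
    ∃ 𝓓, IsSlalomCover (fun k => h k + (f k - g k)) g 𝓓 ∧ #𝓓 ≤ #𝓑 * #𝓒 := by
  have hD : ∀ B ∈ 𝓑, ∀ C ∈ 𝓒, ∃ D, IsSlalom g D ∧
      ∀ k, (C k).image (slalomDecode (B k) (f k)) ⊆ D k := fun B _ C hC =>
    exists_isSlalom_superset _ fun k => Finset.card_image_le.trans (h𝓒.isSlalom C hC k).le
  choose! D hDslalom hDsub using hD
  refine ⟨Set.image2 D 𝓑 𝓒, ⟨?_, fun x hx => ?_⟩, mk_image2_le⟩
  · rintro _ ⟨B, hB, C, hC, rfl⟩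
    exact hDslalom B hB C hC
  obtain ⟨B, hB, hBx⟩ := h𝓑.covers (fun k => if x k < f k then x k else 0) fun k => by
    split_ifs with hk
    exacts [hk, hf k]
  have hcode : ∀ k, ∃ j < h k, slalomDecode (B k) (f k) j = x k := by
    intro k
    have hcard : (B k).card = g k := h𝓑.isSlalom B hB k
    by_cases hk : x k < f k
    · obtain ⟨j, hj, hdec⟩ := exists_lt_card_slalomDecode_eq (by simpa [hk] using hBx k) (f k)
      exact ⟨j, (hcard ▸ hj).trans_le (hgh k), hdec⟩
    · refine ⟨g k + (x k - f k), by have := hx k; have := hgf k; omega, ?_⟩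
      rw [← hcard, slalomDecode_card_add]
      omega
  choose v hvh hvx using hcode
  obtain ⟨C, hC, hCv⟩ := h𝓒.covers v hvh
  exact ⟨D B C, Set.mem_image2_of_mem hB hC,
    fun k => hDsub B hB C hC k (Finset.mem_image.mpr ⟨v k, hCv k, hvx k⟩)⟩

theorem slalomCov_add_sub_le (hg : ∀ k, 1 ≤ g k) (hgf : ∀ k, g k ≤ f k) (hgh : ∀ k, g k ≤ h k) :
    slalomCov (fun k => h k + (f k - g k)) g ≤ slalomCov f g * slalomCov h g := by
  obtain ⟨𝓑, h𝓑, h𝓑mk⟩ := exists_isSlalomCover_mk_eq (f := f) hg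
  obtain ⟨𝓒, h𝓒, h𝓒mk⟩ := exists_isSlalomCover_mk_eq (f := h) hg
  obtain ⟨𝓓, h𝓓, hmk⟩ :=
    h𝓑.exists_add_sub (fun k => (hg k).trans (hgf k)) hgf hgh h𝓒
  exact h𝓑mk ▸ h𝓒mk ▸ (slalomCov_le_mk h𝓓).trans hmk

theorem slalomCov_add_mul_sub_le (hg : ∀ k, 1 ≤ g k) (hgf : ∀ k, g k < f k) (j : ℕ) :
    slalomCov (fun k => g k + j * (f k - g k)) g ≤ slalomCov f g := by
  induction j with
  | zero => simpa using slalomCov_mono hg fun k => (hgf k).le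
  | succ j ih =>
    have hsplit : (fun k => g k + (j + 1) * (f k - g k)) =
        fun k => (g k + j * (f k - g k)) + (f k - g k) := by
      funext k
      ring
    calc slalomCov (fun k => g k + (j + 1) * (f k - g k)) g
        ≤ slalomCov f g * slalomCov (fun k => g k + j * (f k - g k)) g := by
          rw [hsplit]
          exact slalomCov_add_sub_le hg (fun k => (hgf k).le) fun k => Nat.le_add_right _ _
      _ ≤ slalomCov f g * slalomCov f g := mul_le_mul_right ih _
      _ = slalomCov f g := mul_eq_self (aleph0_lt_slalomCov hg hgf).le

theorem exists_le_mul_sub {ε : ℝ} (hε : 0 < ε)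
    (h : ∀ k, (1 + ε) * (g k : ℝ) ≤ (f k : ℝ)) : ∃ M : ℕ, ∀ k, f k ≤ M * (f k - g k) := by
  refine ⟨⌈(1 + ε) / ε⌉₊, fun k => ?_⟩
  have hgf : g k ≤ f k := by
    have : (g k : ℝ) ≤ f k := by nlinarith [h k, (g k).cast_nonneg (α := ℝ)]
    exact_mod_cast this
  have hslack : ε * f k ≤ (1 + ε) * ((f k : ℝ) - g k) := by linarith [h k]
  have hM : (f k : ℝ) ≤ ⌈(1 + ε) / ε⌉₊ * ((f k : ℝ) - g k) :=
    calc (f k : ℝ) ≤ (1 + ε) / ε * ((f k : ℝ) - g k) := by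
          rw [div_mul_eq_mul_div, le_div_iff₀ hε]
          linarith
      _ ≤ ⌈(1 + ε) / ε⌉₊ * ((f k : ℝ) - g k) :=
          mul_le_mul_of_nonneg_right (Nat.le_ceil _) (by simpa using hgf)
  rw [← Nat.cast_sub hgf, ← Nat.cast_mul] at hM
  exact_mod_cast hM

end

theorem slalomCov_nmul_eq (f g : ℕ → ℕ) (hg : ∀ k, 1 ≤ g k)
    (ε : ℝ) (hε : 0 < ε) (h : ∀ k, (1 + ε) * (g k : ℝ) ≤ (f k : ℝ)) :
    ∀ n : ℕ, 1 ≤ n → slalomCov (fun k => n * f k) g = slalomCov f g := by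
  intro n hn
  have hgf : ∀ k, g k < f k := fun k => by
    have : (g k : ℝ) < f k := by nlinarith [h k, (Nat.one_le_cast (α := ℝ)).mpr (hg k)]
    exact_mod_cast this
  obtain ⟨M, hM⟩ := exists_le_mul_sub hε h
  refine le_antisymm ?_ (slalomCov_mono hg fun k => Nat.le_mul_of_pos_left _ hn)
  calc slalomCov (fun k => n * f k) g
      ≤ slalomCov (fun k => g k + n * M * (f k - g k)) g := slalomCov_mono hg fun k =>
        calc n * f k ≤ n * (M * (f k - g k)) := Nat.mul_le_mul_left n (hM k)
          _ ≤ g k + n * M * (f k - g k) := by rw [← mul_assoc]; exact Nat.le_add_left _ _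
    _ ≤ slalomCov f g := slalomCov_add_mul_sub_le hg hgf (n * M)
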